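/- arXiv:2201.06801 — 2 statements merged into one kernel-verified Lean document; each statement's English description precedes it below -/
import Mathlib

section
/- For every L(1,2)-edge labeling f of G_v and every edge e in S_2, at most two edges of G_v have label f(e)+1, and at most two edges of G_v have label f(e)−1. -/
/-- The infinite triangular grid `T6`. -/
def T6 : SimpleGraph (ℤ × ℤ) where
  Adj u v := (v.1 - u.1, v.2 - u.2) ∈
    ({(1,0), (-1,0), (0,1), (0,-1), (1,1), (-1,-1)} : Set (ℤ × ℤ))
  symm := by
    constructor
    rintro ⟨a, b⟩ ⟨c, d⟩ h
    simp only [Set.mem_insert_iff, Set.mem_singleton_iff, Prod.mk.injEq] at h ⊢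
    omega
  loopless := by
    constructor
    rintro ⟨a, b⟩ h
    simp only [Set.mem_insert_iff, Set.mem_singleton_iff, Prod.mk.injEq, sub_self] at h
    omega

/-- `f` is an L(1,2)-edge labeling of `G`. -/
def IsL12 {V : Type*} (G : SimpleGraph V) (f : Sym2 V → ℕ) : Prop :=
  (∀ e1 ∈ G.edgeSet, ∀ e2 ∈ G.edgeSet, e1 ≠ e2 → (∃ v, v ∈ e1 ∧ v ∈ e2) →
    f e1 ≠ f e2) ∧
  (∀ e1 ∈ G.edgeSet, ∀ e2 ∈ G.edgeSet, e1 ≠ e2 → ¬ (∃ v, v ∈ e1 ∧ v ∈ e2) →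
    (∃ e3 ∈ G.edgeSet, (∃ v, v ∈ e1 ∧ v ∈ e3) ∧ (∃ v, v ∈ e2 ∧ v ∈ e3)) →
    2 ≤ |(f e1 : ℤ) - (f e2 : ℤ)|)

/-- The subgraph `G_v` of `T6`: all edges with an endpoint adjacent to `v`. -/
def Gv (v : ℤ × ℤ) : SimpleGraph (ℤ × ℤ) where
  Adj u w := T6.Adj u w ∧ (T6.Adj v u ∨ T6.Adj v w)
  symm := ⟨fun u w h => ⟨T6.adj_symm h.1, h.2.symm⟩⟩
  loopless := ⟨fun u h => T6.loopless.irrefl u h.1⟩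

/-- `S_1`: the edges of `G_v` incident to `v`. -/
def S1 (v : ℤ × ℤ) : Set (Sym2 (ℤ × ℤ)) := {e | e ∈ (Gv v).edgeSet ∧ v ∈ e}

/-- `S_2`: the edges of `G_v` both of whose endpoints are adjacent to `v`. -/
def S2 (v : ℤ × ℤ) : Set (Sym2 (ℤ × ℤ)) := {e | e ∈ (Gv v).edgeSet ∧ ∀ u ∈ e, T6.Adj v u}

/-- `S_3`: the remaining edges of `G_v`. -/
def S3 (v : ℤ × ℤ) : Set (Sym2 (ℤ × ℤ)) := (Gv v).edgeSet \ (S1 v ∪ S2 v)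

/-!
Let `e = s(u, w) ∈ S_2` and `|t - f e| = 1`. Two distinct edges labelled `t` cannot both meet
`e`, since they would be at distance 1 or 2. An edge labelled `t` that misses `e` is not at
distance 2 from it either, so its endpoint `z` adjacent to `v` is neither `u`, `w` nor a neighbour
of them; in the hexagon around `v` this leaves only the reflections of `u` and `w` through `v`,
which are adjacent. So two such edges are again at distance at most 2, and at most one edge
labelled `t` misses `e`.
-/

open Equiv

abbrev Sym2.Meets {V : Type*} (e₁ e₂ : Sym2 V) : Prop := ∃ v, v ∈ e₁ ∧ v ∈ e₂

def edgesLabeled {V : Type*} (G : SimpleGraph V) (f : Sym2 V → ℕ) (t : ℤ) : Set (Sym2 V) :=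
  {x | x ∈ G.edgeSet ∧ (f x : ℤ) = t}

theorem eq_or_eq_or_eq_of_sep_subsingleton {α : Type*} {s : Set α} {p : α → Prop}
    (h₁ : {x ∈ s | p x}.Subsingleton) (h₂ : {x ∈ s | ¬p x}.Subsingleton)
    {a b c : α} (ha : a ∈ s) (hb : b ∈ s) (hc : c ∈ s) : a = b ∨ a = c ∨ b = c := by
  have key : ∀ {x y}, x ∈ s → y ∈ s → (p x ↔ p y) → x = y := fun {x y} hx hy hxy => by
    by_cases px : p x
    exacts [h₁ ⟨hx, px⟩ ⟨hy, hxy.1 px⟩, h₂ ⟨hx, px⟩ ⟨hy, mt hxy.2 px⟩]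
  by_cases hab : p a ↔ p b
  · exact Or.inl (key ha hb hab)
  by_cases hac : p a ↔ p c
  · exact Or.inr (Or.inl (key ha hc hac))
  exact Or.inr (Or.inr (key hb hc (by tauto)))

theorem SimpleGraph.eq_or_adj_of_mem_pair {V : Type*} (G : SimpleGraph V) {p q x y : V}
    (hpq : G.Adj p q) (hx : x = p ∨ x = q) (hy : y = p ∨ y = q) : x = y ∨ G.Adj x y := by
  rcases hx with rfl | rfl <;> rcases hy with rfl | rfl <;> simp [hpq, hpq.symm]

namespace IsL12

variable {V : Type*} {G : SimpleGraph V} {f : Sym2 V → ℕ} {a b c : Sym2 V}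

theorem eq_of_meets_common (hf : IsL12 G f) (ha : a ∈ G.edgeSet) (hb : b ∈ G.edgeSet)
    (hc : c ∈ G.edgeSet) (hac : a.Meets c) (hbc : b.Meets c) (hab : f a = f b) : a = b := by
  by_contra hne
  by_cases hmeet : a.Meets b
  · exact hf.1 a ha b hb hne hmeet hab
  · simpa [hab] using hf.2 a ha b hb hne hmeet ⟨c, hc, hac, hbc⟩

theorem not_meets_common (hf : IsL12 G f) (ha : a ∈ G.edgeSet) (hc : c ∈ G.edgeSet)
    (hlab : |(f a : ℤ) - f c| = 1) (hac : ¬a.Meets c) (hb : b ∈ G.edgeSet) (hab : a.Meets b) :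
    ¬c.Meets b := by
  intro hcb
  have hne : a ≠ c := by rintro rfl; simp at hlab
  have := hf.2 a ha c hc hne hac ⟨b, hb, hab, hcb⟩
  omega

theorem subsingleton_edgesLabeled_meets (hf : IsL12 G f) (hc : c ∈ G.edgeSet) (t : ℤ) :
    {x ∈ edgesLabeled G f t | x.Meets c}.Subsingleton := by
  rintro x ⟨⟨hx, hfx⟩, hxc⟩ y ⟨⟨hy, hfy⟩, hyc⟩
  exact hf.eq_of_meets_common hx hy hc hxc hyc (by omega)

end IsL12

def hexDirs : Finset (ℤ × ℤ) := {(1, 0), (-1, 0), (0, 1), (0, -1), (1, 1), (-1, -1)}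

theorem T6_adj_iff {a b : ℤ × ℤ} : T6.Adj a b ↔ b - a ∈ hexDirs := by
  simp [T6, hexDirs, Prod.ext_iff]

theorem neg_mem_hexDirs_iff {d : ℤ × ℤ} : -d ∈ hexDirs ↔ d ∈ hexDirs := by
  have key : ∀ d ∈ hexDirs, -d ∈ hexDirs := by decide
  exact ⟨fun h => by simpa using key _ h, key d⟩

theorem eq_neg_of_mem_hexDirs_of_sub_not_mem :
    ∀ du ∈ hexDirs, ∀ dw ∈ hexDirs, dw - du ∈ hexDirs → ∀ dz ∈ hexDirs,
    dz ≠ du → dz ≠ dw → dz - du ∉ hexDirs → dz - dw ∉ hexDirs → dz = -du ∨ dz = -dw := by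
  decide

theorem T6_adj_pointReflection {v a b : ℤ × ℤ} :
    T6.Adj (pointReflection v a) (pointReflection v b) ↔ T6.Adj a b := by
  rw [T6_adj_iff, T6_adj_iff, ← neg_mem_hexDirs_iff]
  simp [pointReflection_apply]

theorem T6_eq_pointReflection_of_not_adj {v u w z : ℤ × ℤ} (hvu : T6.Adj v u)
    (hvw : T6.Adj v w) (huw : T6.Adj u w) (hvz : T6.Adj v z) (hzu : z ≠ u) (hzw : z ≠ w)
    (hzu' : ¬T6.Adj u z) (hzw' : ¬T6.Adj w z) :
    z = pointReflection v u ∨ z = pointReflection v w := by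
  rw [T6_adj_iff] at hvu hvw huw hvz hzu' hzw'
  have := eq_neg_of_mem_hexDirs_of_sub_not_mem (u - v) hvu (w - v) hvw (by simpa using huw)
    (z - v) hvz (by simpa using hzu) (by simpa using hzw) (by simpa using hzu')
    (by simpa using hzw')
  simpa [pointReflection_apply, sub_eq_iff_eq_add] using this

theorem Gv_exists_adj_of_mem_edgeSet {v : ℤ × ℤ} {e : Sym2 (ℤ × ℤ)} (he : e ∈ (Gv v).edgeSet) :
    ∃ z ∈ e, T6.Adj v z := by
  induction e using Sym2.ind with
  | _ x y =>
    rcases he.2 with h | h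
    exacts [⟨x, by simp, h⟩, ⟨y, by simp, h⟩]

theorem Gv_mem_edgeSet_of_adj {v z y : ℤ × ℤ} (hvz : T6.Adj v z) (hzy : T6.Adj z y) :
    s(z, y) ∈ (Gv v).edgeSet :=
  ⟨hzy, Or.inl hvz⟩

section S2

variable {v : ℤ × ℤ} {f : Sym2 (ℤ × ℤ) → ℕ}

theorem exists_mem_eq_pointReflection_of_not_meets (hf : IsL12 (Gv v) f) {u w : ℤ × ℤ}
    (hvu : T6.Adj v u) (hvw : T6.Adj v w) (huw : T6.Adj u w) {a : Sym2 (ℤ × ℤ)}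
    (ha : a ∈ (Gv v).edgeSet) (hlab : |(f a : ℤ) - f s(u, w)| = 1) (hmeets : ¬a.Meets s(u, w)) :
    ∃ z ∈ a, T6.Adj v z ∧ (z = pointReflection v u ∨ z = pointReflection v w) := by
  obtain ⟨z, hza, hvz⟩ := Gv_exists_adj_of_mem_edgeSet ha
  have hfar : ∀ y ∈ s(u, w), z ≠ y ∧ ¬T6.Adj y z := fun y hy =>
    ⟨by rintro rfl; exact hmeets ⟨z, hza, hy⟩, fun hyz =>
      hf.not_meets_common ha (Gv_mem_edgeSet_of_adj hvu huw) hlab hmeets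
        (Gv_mem_edgeSet_of_adj hvz hyz.symm) ⟨z, hza, by simp⟩ ⟨y, hy, by simp⟩⟩
  obtain ⟨hzu, hzu'⟩ := hfar u (by simp)
  obtain ⟨hzw, hzw'⟩ := hfar w (by simp)
  exact ⟨z, hza, hvz, T6_eq_pointReflection_of_not_adj hvu hvw huw hvz hzu hzw hzu' hzw'⟩

theorem subsingleton_edgesLabeled_not_meets (hf : IsL12 (Gv v) f) {e : Sym2 (ℤ × ℤ)}
    (he : e ∈ S2 v) {t : ℤ} (ht : |t - f e| = 1) :
    {x ∈ edgesLabeled (Gv v) f t | ¬x.Meets e}.Subsingleton := by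
  induction e using Sym2.ind with
  | _ u w =>
    obtain ⟨hvu, hvw⟩ : T6.Adj v u ∧ T6.Adj v w := ⟨he.2 u (by simp), he.2 w (by simp)⟩
    have huw : T6.Adj u w := he.1.1
    rintro x ⟨⟨hx, rfl⟩, hxe⟩ y ⟨⟨hy, hfy⟩, hye⟩
    obtain ⟨zx, hzx, hvzx, hx'⟩ :=
      exists_mem_eq_pointReflection_of_not_meets hf hvu hvw huw hx ht hxe
    obtain ⟨zy, hzy, -, hy'⟩ :=
      exists_mem_eq_pointReflection_of_not_meets hf hvu hvw huw hy (hfy ▸ ht) hye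
    have hlab : f x = f y := by omega
    rcases T6.eq_or_adj_of_mem_pair (T6_adj_pointReflection.2 huw) hx' hy' with rfl | hadj
    · exact hf.eq_of_meets_common hx hy hx ⟨zx, hzx, hzx⟩ ⟨zx, hzy, hzx⟩ hlab
    · exact hf.eq_of_meets_common hx hy (Gv_mem_edgeSet_of_adj hvzx hadj) ⟨zx, hzx, by simp⟩
        ⟨zy, hzy, by simp⟩ hlab

end S2

/-- For an edge `e ∈ S_2`, at most two edges of `G_v` have label `f e + 1`, and at
most two edges of `G_v` have label `f e - 1`. -/
theorem S2_adjacent_labels_at_most_twice (v : ℤ × ℤ) (f : Sym2 (ℤ × ℤ) → ℕ)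
    (hf : IsL12 (Gv v) f) : ∀ e ∈ S2 v,
    (∀ e1 ∈ (Gv v).edgeSet, ∀ e2 ∈ (Gv v).edgeSet, ∀ e3 ∈ (Gv v).edgeSet,
      f e1 = f e + 1 → f e2 = f e + 1 → f e3 = f e + 1 →
      e1 = e2 ∨ e1 = e3 ∨ e2 = e3) ∧
    (∀ e1 ∈ (Gv v).edgeSet, ∀ e2 ∈ (Gv v).edgeSet, ∀ e3 ∈ (Gv v).edgeSet,
      (f e1 : ℤ) = (f e : ℤ) - 1 → (f e2 : ℤ) = (f e : ℤ) - 1 →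
      (f e3 : ℤ) = (f e : ℤ) - 1 → e1 = e2 ∨ e1 = e3 ∨ e2 = e3) := by
  intro e he
  have at_most_two : ∀ t : ℤ, |t - f e| = 1 → ∀ {a b c}, a ∈ edgesLabeled (Gv v) f t →
      b ∈ edgesLabeled (Gv v) f t → c ∈ edgesLabeled (Gv v) f t → a = b ∨ a = c ∨ b = c :=
    fun t ht => eq_or_eq_or_eq_of_sep_subsingleton (hf.subsingleton_edgesLabeled_meets he.1 t)
      (subsingleton_edgesLabeled_not_meets hf he ht)
  constructor
  · intro e1 h1 e2 h2 e3 h3 g1 g2 g3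
    exact at_most_two (f e + 1) (by simp) ⟨h1, by simp [g1]⟩ ⟨h2, by simp [g2]⟩ ⟨h3, by simp [g3]⟩
  · intro e1 h1 e2 h2 e3 h3 g1 g2 g3
    exact at_most_two (f e - 1) (by simp) ⟨h1, g1⟩ ⟨h2, g2⟩ ⟨h3, g3⟩
end

section
/- For every L(1,2)-edge labeling f of G_v and every nonnegative integer c: if each of the three consecutive values c, c+1 and c+2 is the label of three edges of S_3, then no edge of S_3 has label c−1 and no edge of S_3 has label c+3. -/
/-- The label `c` is used on (at least) three edges of `S_3`. -/
def UsedThriceInS3 (v : ℤ × ℤ) (f : Sym2 (ℤ × ℤ) → ℕ) (c : ℕ) : Prop :=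
  ∃ e1 e2 e3, e1 ∈ S3 v ∧ e2 ∈ S3 v ∧ e3 ∈ S3 v ∧
    e1 ≠ e2 ∧ e1 ≠ e3 ∧ e2 ≠ e3 ∧ f e1 = c ∧ f e2 = c ∧ f e3 = c

/-!
Number the neighbours of `v` cyclically as `v + dir i`, `i : Fin 6`. Each is the inner endpoint
of exactly three edges of `S_3`, its fan. Two edges of one fan share a vertex, and two edges of
adjacent fans meet a common edge of the hexagon, so they carry distinct labels; hence a label used
three times in `S_3` is used once in every fan of one of the two parity classes of the hexagon.
Every edge of `S_3` is at distance exactly 2 from all edges of a suitable adjacent fan. So the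
labels `c`, `c + 1`, `c + 2` live on the same parity class, where they fill every fan, and every
edge of the other class is at distance 2 from edges labelled `c` and `c + 2`.
-/

/-- `g i p` stands for the label of the `p`-th edge of `S_3` leaving the `i`-th neighbour of `v`,
the neighbours being numbered cyclically. -/
structure IsFanLabeling (g : Fin 6 → Fin 3 → ℤ) : Prop where
  injective : ∀ i, Function.Injective (g i)
  ne_succ : ∀ i p q, g i p ≠ g (i + 1) q
  exists_gap : ∀ i p, ∃ j, (j = i + 1 ∨ i = j + 1) ∧ ∀ q, 2 ≤ |g i p - g j q|

def OccursInParityClass (g : Fin 6 → Fin 3 → ℤ) (ℓ : ℤ) (i : Fin 6) : Prop :=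
  ∀ j : Fin 6, j.val % 2 = i.val % 2 → ∃ p, g j p = ℓ

namespace IsFanLabeling

variable {g : Fin 6 → Fin 3 → ℤ}

theorem far_of_apply_eq (hg : IsFanLabeling g) {i j : Fin 6} {p q : Fin 3}
    (h : g i p = g j q) (hne : (i, p) ≠ (j, q)) : j ≠ i ∧ j ≠ i + 1 ∧ i ≠ j + 1 := by
  refine ⟨?_, ?_, ?_⟩
  · rintro rfl
    exact hne (by rw [hg.injective j h])
  · rintro rfl
    exact hg.ne_succ i p q h
  · rintro rfl
    exact hg.ne_succ j q p h.symm

theorem occursInParityClass_of_three (hg : IsFanLabeling g) {ℓ : ℤ} {a b c : Fin 6 × Fin 3}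
    (hab : a ≠ b) (hac : a ≠ c) (hbc : b ≠ c)
    (ha : g a.1 a.2 = ℓ) (hb : g b.1 b.2 = ℓ) (hc : g c.1 c.2 = ℓ) :
    OccursInParityClass g ℓ a.1 := by
  have hfar_ab := hg.far_of_apply_eq (ha.trans hb.symm) hab
  have hfar_ac := hg.far_of_apply_eq (ha.trans hc.symm) hac
  have hfar_bc := hg.far_of_apply_eq (hb.trans hc.symm) hbc
  intro j hj
  -- three pairwise non-adjacent vertices of a hexagon form one of its two parity classes
  have : j = a.1 ∨ j = b.1 ∨ j = c.1 := by omega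
  rcases this with rfl | rfl | rfl
  exacts [⟨a.2, ha⟩, ⟨b.2, hb⟩, ⟨c.2, hc⟩]

theorem parity_eq_of_abs_sub_lt_two (hg : IsFanLabeling g) {ℓ ℓ' : ℤ} {i i' : Fin 6}
    (h : OccursInParityClass g ℓ i) (h' : OccursInParityClass g ℓ' i') (hclose : |ℓ' - ℓ| < 2) :
    i.val % 2 = i'.val % 2 := by
  by_contra hpar
  obtain ⟨p, hp⟩ := h' i' rfl
  obtain ⟨j, hj, hgap⟩ := hg.exists_gap i' p
  obtain ⟨q, hq⟩ := h j (by omega)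
  have := hgap q
  rw [hp, hq] at this
  omega

theorem apply_ne_sub_one_and_ne_add_three (hg : IsFanLabeling g) {ℓ : ℤ} {i₀ i₁ i₂ : Fin 6}
    (h₀ : OccursInParityClass g ℓ i₀) (h₁ : OccursInParityClass g (ℓ + 1) i₁)
    (h₂ : OccursInParityClass g (ℓ + 2) i₂) (i : Fin 6) (p : Fin 3) :
    g i p ≠ ℓ - 1 ∧ g i p ≠ ℓ + 3 := by
  have h₀₁ := hg.parity_eq_of_abs_sub_lt_two h₀ h₁ (by norm_num)
  have h₀₂ := h₀₁.trans (hg.parity_eq_of_abs_sub_lt_two h₁ h₂ (by norm_num))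
  by_cases hi : i.val % 2 = i₀.val % 2
  · obtain ⟨p₀, hp₀⟩ := h₀ i hi
    obtain ⟨p₁, hp₁⟩ := h₁ i (hi.trans h₀₁)
    obtain ⟨p₂, hp₂⟩ := h₂ i (hi.trans h₀₂)
    have hp₀₁ : p₀ ≠ p₁ := by rintro rfl; omega
    have hp₀₂ : p₀ ≠ p₂ := by rintro rfl; omega
    have hp₁₂ : p₁ ≠ p₂ := by rintro rfl; omega
    have : p = p₀ ∨ p = p₁ ∨ p = p₂ := by omega
    rcases this with rfl | rfl | rfl <;> omega
  · obtain ⟨j, hj, hgap⟩ := hg.exists_gap i p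
    have hj₀ : j.val % 2 = i₀.val % 2 := by omega
    obtain ⟨q₀, hq₀⟩ := h₀ j hj₀
    obtain ⟨q₂, hq₂⟩ := h₂ j (hj₀.trans h₀₂)
    have hgap₀ := hgap q₀
    have hgap₂ := hgap q₂
    rw [hq₀] at hgap₀
    rw [hq₂] at hgap₂
    constructor <;> rintro h
    · rw [h] at hgap₀
      norm_num at hgap₀
    · rw [h] at hgap₂
      norm_num at hgap₂

end IsFanLabeling

theorem IsL12.apply_ne_of_meet_common_edge {V : Type*} {G : SimpleGraph V} {f : Sym2 V → ℕ}
    (hf : IsL12 G f) {e₁ e₂ e₃ : Sym2 V} (h₁ : e₁ ∈ G.edgeSet) (h₂ : e₂ ∈ G.edgeSet)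
    (h₃ : e₃ ∈ G.edgeSet) (hne : e₁ ≠ e₂) (hm₁ : ∃ u, u ∈ e₁ ∧ u ∈ e₃)
    (hm₂ : ∃ u, u ∈ e₂ ∧ u ∈ e₃) : f e₁ ≠ f e₂ := by
  by_cases hm : ∃ u, u ∈ e₁ ∧ u ∈ e₂
  · exact hf.1 e₁ h₁ e₂ h₂ hne hm
  · intro h
    have := hf.2 e₁ h₁ e₂ h₂ hne hm ⟨e₃, h₃, hm₁, hm₂⟩
    rw [h, sub_self, abs_zero] at this
    norm_num at this

namespace T6

def dir : Fin 6 → ℤ × ℤ := ![(1, 0), (1, 1), (0, 1), (-1, 0), (-1, -1), (0, -1)]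

theorem adj_iff_exists_dir {u w : ℤ × ℤ} : T6.Adj u w ↔ ∃ i, w = u + dir i := by
  obtain ⟨a, b⟩ := u
  obtain ⟨c, d⟩ := w
  simp only [T6, Int.reduceNeg, Set.mem_insert_iff, Prod.ext_iff, Set.mem_singleton_iff, dir,
    Prod.fst_add, Prod.snd_add, Fin.exists_fin_succ, Fin.isValue, Matrix.cons_val_zero, add_zero,
    Matrix.cons_val_succ, Matrix.cons_val_fin_one, exists_const]
  omega

theorem adj_add_dir (u : ℤ × ℤ) (i : Fin 6) : T6.Adj u (u + dir i) :=
  adj_iff_exists_dir.2 ⟨i, rfl⟩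

/-- The edges of `S_3` at `v + dir i` point in the directions `dir (i - 1)`, `dir i` and
`dir (i + 1)`. -/
def turn : Fin 3 → Fin 6 := ![-1, 0, 1]

def outer (i : Fin 6) (p : Fin 3) : ℤ × ℤ := dir i + dir (i + turn p)

def s3Edge (v : ℤ × ℤ) (i : Fin 6) (p : Fin 3) : Sym2 (ℤ × ℤ) := s(v + dir i, v + outer i p)

theorem exists_turn_eq : ∀ i k : Fin 6, dir i + dir k ≠ 0 → (∀ j, dir i + dir k ≠ dir j) →
    ∃ p, k = i + turn p := by
  decide

theorem dir_succ : ∀ i : Fin 6, dir (i + 1) = dir i + dir (i + 2) := by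
  decide

theorem outer_injective : ∀ i : Fin 6, Function.Injective (outer i) := by
  decide

theorem dir_ne_dir_succ_and_outer_succ :
    ∀ (i : Fin 6) (q : Fin 3), dir i ≠ dir (i + 1) ∧ dir i ≠ outer (i + 1) q := by
  decide

theorem exists_adjacent_fan_apart : ∀ (i : Fin 6) (p : Fin 3), ∃ j, (j = i + 1 ∨ i = j + 1) ∧
    ∀ q, dir i ≠ dir j ∧ dir i ≠ outer j q ∧ outer i p ≠ dir j ∧ outer i p ≠ outer j q := by
  decide

variable {v : ℤ × ℤ}

theorem add_mem_s3Edge_iff {a : ℤ × ℤ} {i : Fin 6} {p : Fin 3} :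
    v + a ∈ s3Edge v i p ↔ a = dir i ∨ a = outer i p := by
  simp [s3Edge]

theorem s3Edge_mem_edgeSet (i : Fin 6) (p : Fin 3) : s3Edge v i p ∈ (Gv v).edgeSet :=
  ⟨by simpa only [outer, add_assoc] using adj_add_dir (v + dir i) (i + turn p),
    Or.inl (adj_add_dir v i)⟩

theorem mk_dir_dir_succ_mem_edgeSet (i : Fin 6) :
    s(v + dir i, v + dir (i + 1)) ∈ (Gv v).edgeSet :=
  ⟨by simpa only [dir_succ, add_assoc] using adj_add_dir (v + dir i) (i + 2),
    Or.inl (adj_add_dir v i)⟩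

theorem exists_eq_s3Edge_of_adj {x y : ℤ × ℤ} (hxy : T6.Adj x y) (hx : T6.Adj v x) (hyv : y ≠ v)
    (hy : ¬ T6.Adj v y) : ∃ i p, s(x, y) = s3Edge v i p := by
  obtain ⟨i, rfl⟩ := adj_iff_exists_dir.1 hx
  obtain ⟨k, rfl⟩ := adj_iff_exists_dir.1 hxy
  obtain ⟨p, rfl⟩ := exists_turn_eq i k
    (fun h => hyv (by rw [add_assoc, h, add_zero]))
    (fun j h => hy (adj_iff_exists_dir.2 ⟨j, by rw [add_assoc, h]⟩))
  exact ⟨i, p, by rw [s3Edge, outer, add_assoc]⟩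

theorem exists_eq_s3Edge {e : Sym2 (ℤ × ℤ)} (he : e ∈ S3 v) : ∃ i p, e = s3Edge v i p := by
  induction e using Sym2.ind with
  | h x y =>
    obtain ⟨hG, hnot⟩ := he
    simp only [S1, S2, Set.mem_union, Set.mem_ofPred_eq, hG, true_and, Sym2.mem_iff, not_or,
      forall_eq_or_imp, forall_eq] at hnot
    obtain ⟨⟨hvx, hvy⟩, hboth⟩ := hnot
    rcases hG.2 with hx | hy
    · exact exists_eq_s3Edge_of_adj hG.1 hx (Ne.symm hvy) fun hy => hboth ⟨hx, hy⟩
    · obtain ⟨i, p, h⟩ :=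
        exists_eq_s3Edge_of_adj hG.1.symm hy (Ne.symm hvx) fun hx => hboth ⟨hx, hy⟩
      exact ⟨i, p, Sym2.eq_swap.trans h⟩

def s3Labels (v : ℤ × ℤ) (f : Sym2 (ℤ × ℤ) → ℕ) (i : Fin 6) (p : Fin 3) : ℤ := f (s3Edge v i p)

variable {f : Sym2 (ℤ × ℤ) → ℕ}

theorem isFanLabeling_s3Labels (hf : IsL12 (Gv v) f) : IsFanLabeling (s3Labels v f) where
  injective i p q h := by
    by_contra hpq
    refine hf.1 _ (s3Edge_mem_edgeSet i p) _ (s3Edge_mem_edgeSet i q) ?_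
      ⟨v + dir i, Sym2.mem_mk_left _ _, Sym2.mem_mk_left _ _⟩ (Nat.cast_inj.mp h)
    rw [s3Edge, s3Edge, ne_eq, Sym2.congr_right, add_right_inj]
    exact fun h => hpq (outer_injective i h)
  ne_succ i p q h := by
    refine hf.apply_ne_of_meet_common_edge (s3Edge_mem_edgeSet i p) (s3Edge_mem_edgeSet (i + 1) q)
      (mk_dir_dir_succ_mem_edgeSet i) ?_ ⟨v + dir i, Sym2.mem_mk_left _ _, Sym2.mem_mk_left _ _⟩
      ⟨v + dir (i + 1), Sym2.mem_mk_left _ _, Sym2.mem_mk_right _ _⟩ (Nat.cast_inj.mp h)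
    intro he
    have hmem : v + dir i ∈ s3Edge v (i + 1) q := he ▸ Sym2.mem_mk_left _ _
    rw [add_mem_s3Edge_iff] at hmem
    have := dir_ne_dir_succ_and_outer_succ i q
    tauto
  exists_gap i p := by
    obtain ⟨j, hj, hapart⟩ := exists_adjacent_fan_apart i p
    refine ⟨j, hj, fun q => ?_⟩
    have hdisj : ¬ ∃ u, u ∈ s3Edge v i p ∧ u ∈ s3Edge v j q := by
      rintro ⟨u, hu, hu'⟩
      rcases Sym2.mem_iff.1 hu with rfl | rfl <;> rw [add_mem_s3Edge_iff] at hu' <;>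
        have := hapart q <;> tauto
    have hne : s3Edge v i p ≠ s3Edge v j q := fun he =>
      hdisj ⟨v + dir i, Sym2.mem_mk_left _ _, he ▸ Sym2.mem_mk_left _ _⟩
    refine hf.2 _ (s3Edge_mem_edgeSet i p) _ (s3Edge_mem_edgeSet j q) hne hdisj ?_
    rcases hj with rfl | rfl
    · exact ⟨_, mk_dir_dir_succ_mem_edgeSet i,
        ⟨v + dir i, Sym2.mem_mk_left _ _, Sym2.mem_mk_left _ _⟩,
        ⟨v + dir (i + 1), Sym2.mem_mk_left _ _, Sym2.mem_mk_right _ _⟩⟩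
    · exact ⟨_, mk_dir_dir_succ_mem_edgeSet j,
        ⟨v + dir (j + 1), Sym2.mem_mk_left _ _, Sym2.mem_mk_right _ _⟩,
        ⟨v + dir j, Sym2.mem_mk_left _ _, Sym2.mem_mk_left _ _⟩⟩

theorem exists_occursInParityClass (hf : IsL12 (Gv v) f) {n : ℕ} (h : UsedThriceInS3 v f n) :
    ∃ i, OccursInParityClass (s3Labels v f) n i := by
  obtain ⟨e₁, e₂, e₃, he₁, he₂, he₃, h₁₂, h₁₃, h₂₃, hf₁, hf₂, hf₃⟩ := h
  obtain ⟨i₁, p₁, rfl⟩ := exists_eq_s3Edge he₁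
  obtain ⟨i₂, p₂, rfl⟩ := exists_eq_s3Edge he₂
  obtain ⟨i₃, p₃, rfl⟩ := exists_eq_s3Edge he₃
  refine ⟨i₁, (isFanLabeling_s3Labels hf).occursInParityClass_of_three (a := (i₁, p₁))
    (b := (i₂, p₂)) (c := (i₃, p₃)) (fun h => h₁₂ (by cases h; rfl))
    (fun h => h₁₃ (by cases h; rfl)) (fun h => h₂₃ (by cases h; rfl))
    (congrArg Nat.cast hf₁) (congrArg Nat.cast hf₂) (congrArg Nat.cast hf₃)⟩

end T6

/-- If each of the three consecutive labels `c`, `c+1`, `c+2` is the label of three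
edges of `S_3`, then no edge of `S_3` has label `c-1` and no edge of `S_3` has
label `c+3`. -/
theorem no_four_consecutive_thrice (v : ℤ × ℤ) (f : Sym2 (ℤ × ℤ) → ℕ)
    (hf : IsL12 (Gv v) f) (c : ℕ)
    (h0 : UsedThriceInS3 v f c) (h1 : UsedThriceInS3 v f (c + 1))
    (h2 : UsedThriceInS3 v f (c + 2)) :
    ∀ e ∈ S3 v, (f e : ℤ) ≠ (c : ℤ) - 1 ∧ f e ≠ c + 3 := by
  obtain ⟨i₀, h₀⟩ := T6.exists_occursInParityClass hf h0
  obtain ⟨i₁, h₁⟩ := T6.exists_occursInParityClass hf h1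
  obtain ⟨i₂, h₂⟩ := T6.exists_occursInParityClass hf h2
  push_cast at h₁ h₂
  intro e he
  obtain ⟨i, p, rfl⟩ := T6.exists_eq_s3Edge he
  obtain ⟨hlo, hhi⟩ :=
    (T6.isFanLabeling_s3Labels hf).apply_ne_sub_one_and_ne_add_three h₀ h₁ h₂ i p
  exact ⟨hlo, fun h => hhi (by rw [T6.s3Labels, h]; push_cast; rfl)⟩
end
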